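/- arXiv:1812.09088 — 4 statements merged into one kernel-verified Lean document; each statement's English description precedes it below -/
import Mathlib

section
/- The edge function pair f₁(ξ₁,ξ₂) = g(ξ₂)(b₀(ξ₁)+b₁(ξ₁)) − β^{(1)}(ξ₂) g′(ξ₂) (h/p) b₁(ξ₁) on patch 1 and f₂(ξ₁,ξ₂) = g(ξ₁)(b₀(ξ₂)+b₁(ξ₂)) − β^{(2)}(ξ₁) g′(ξ₁) (h/p) b₁(ξ₂) on patch 2 satisfies the C⁰ interface condition f₁(0,ξ) = f₂(ξ,0) = g(ξ) and the G¹ condition α^{(1)}(ξ) ∂₂f₂(ξ,0) + α^{(2)}(ξ) ∂₁f₁(0,ξ) + β(ξ) ∂₂f₁(0,ξ) = 0, where β = α^{(1)} β^{(2)} + α^{(2)} β^{(1)}. -/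
open Set

noncomputable def pd1 (f : ℝ × ℝ → ℝ) (x : ℝ × ℝ) : ℝ := fderiv ℝ f x (1, 0)
noncomputable def pd2 (f : ℝ × ℝ → ℝ) (x : ℝ × ℝ) : ℝ := fderiv ℝ f x (0, 1)

/-- The first family of edge functions satisfies the `C⁰` interface condition
(trace `g`) and the `G¹` condition with `β = α⁽¹⁾β⁽²⁾ + α⁽²⁾β⁽¹⁾`. -/
theorem edge_function_trace_G1 (g b0 b1 α1 α2 β1 β2 : ℝ → ℝ) (h p : ℝ)
    (hh : 0 < h) (hp : 0 < p)
    (hg : ContDiff ℝ 2 g) (hb0 : Differentiable ℝ b0) (hb1 : Differentiable ℝ b1)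
    (hβ1 : Differentiable ℝ β1) (hβ2 : Differentiable ℝ β2)
    (hval : b0 0 + b1 0 = 1) (hd0 : deriv b0 0 = -p / h)
    (hd1 : deriv b1 0 = p / h) (hb10 : b1 0 = 0)
    (f1 f2 : ℝ × ℝ → ℝ)
    (hf1 : f1 = fun x => g x.2 * (b0 x.1 + b1 x.1) -
      β1 x.2 * deriv g x.2 * (h / p) * b1 x.1)
    (hf2 : f2 = fun x => g x.1 * (b0 x.2 + b1 x.2) -
      β2 x.1 * deriv g x.1 * (h / p) * b1 x.2) :
    ∀ ξ ∈ Icc (0:ℝ) 1,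
      f1 (0, ξ) = g ξ ∧ f2 (ξ, 0) = g ξ ∧
      α1 ξ * pd2 f2 (ξ, 0) + α2 ξ * pd1 f1 (0, ξ) +
        (α1 ξ * β2 ξ + α2 ξ * β1 ξ) * pd2 f1 (0, ξ) = 0 := by
  have hgd : Differentiable ℝ g := hg.differentiable (by norm_num)
  have hg' : ContDiff ℝ 1 (deriv g) := by
    exact (contDiff_succ_iff_deriv.mp (show ContDiff ℝ (1 + 1) g by exact_mod_cast hg)).2.2
  have hdg : Differentiable ℝ (deriv g) := hg'.differentiable (by norm_num)
  have hdf1 : Differentiable ℝ f1 := by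
    subst hf1
    exact (((hgd.comp differentiable_snd).mul
      ((hb0.comp differentiable_fst).add (hb1.comp differentiable_fst)))).sub
      ((((hβ1.comp differentiable_snd).mul (hdg.comp differentiable_snd)).mul
        (differentiable_const _)).mul (hb1.comp differentiable_fst))
  have hdf2 : Differentiable ℝ f2 := by
    subst hf2
    exact (((hgd.comp differentiable_fst).mul
      ((hb0.comp differentiable_snd).add (hb1.comp differentiable_snd)))).sub
      ((((hβ2.comp differentiable_fst).mul (hdg.comp differentiable_fst)).mul
        (differentiable_const _)).mul (hb1.comp differentiable_snd))
  have hb00 : b0 0 = 1 := by rw [hb10] at hval; linarith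
  intro ξ _
  have hhp : h / p * (p / h) = 1 := by field_simp
  -- pd1 f1 (0, ξ)
  have key1 : HasDerivAt (fun t => f1 (t, ξ)) (pd1 f1 (0, ξ)) 0 := by
    have := (hdf1 (0, ξ)).hasFDerivAt.comp_hasDerivAt 0
      (HasDerivAt.prodMk (hasDerivAt_id (0:ℝ)) (hasDerivAt_const (0:ℝ) ξ))
    exact this
  have exp1 : HasDerivAt (fun t => f1 (t, ξ))
      (g ξ * (deriv b0 0 + deriv b1 0) -
        β1 ξ * deriv g ξ * (h / p) * deriv b1 0) 0 := by
    subst hf1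
    exact (((hb0 0).hasDerivAt.add (hb1 0).hasDerivAt).const_mul (g ξ)).sub
      ((hb1 0).hasDerivAt.const_mul (β1 ξ * deriv g ξ * (h / p)))
  have e1 : pd1 f1 (0, ξ) = -(β1 ξ * deriv g ξ) := by
    have := key1.unique exp1
    rw [this, hd0, hd1]
    field_simp
    ring
  -- pd2 f1 (0, ξ)
  have hflat1 : (fun t => f1 (0, t)) = g := by
    funext t; simp [hf1, hb00, hb10]
  have key2 : HasDerivAt (fun t => f1 (0, t)) (pd2 f1 (0, ξ)) ξ := by
    have := (hdf1 (0, ξ)).hasFDerivAt.comp_hasDerivAt ξ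
      (HasDerivAt.prodMk (hasDerivAt_const ξ (0:ℝ)) (hasDerivAt_id ξ))
    exact this
  have e2 : pd2 f1 (0, ξ) = deriv g ξ := by
    exact (hflat1 ▸ key2 : HasDerivAt g _ ξ).unique (hgd ξ).hasDerivAt
  -- pd2 f2 (ξ, 0)
  have key3 : HasDerivAt (fun t => f2 (ξ, t)) (pd2 f2 (ξ, 0)) 0 := by
    have := (hdf2 (ξ, 0)).hasFDerivAt.comp_hasDerivAt 0
      (HasDerivAt.prodMk (hasDerivAt_const (0:ℝ) ξ) (hasDerivAt_id (0:ℝ)))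
    exact this
  have exp3 : HasDerivAt (fun t => f2 (ξ, t))
      (g ξ * (deriv b0 0 + deriv b1 0) -
        β2 ξ * deriv g ξ * (h / p) * deriv b1 0) 0 := by
    subst hf2
    exact (((hb0 0).hasDerivAt.add (hb1 0).hasDerivAt).const_mul (g ξ)).sub
      ((hb1 0).hasDerivAt.const_mul (β2 ξ * deriv g ξ * (h / p)))
  have e3 : pd2 f2 (ξ, 0) = -(β2 ξ * deriv g ξ) := by
    have := key3.unique exp3
    rw [this, hd0, hd1]
    field_simp
    ring
  refine ⟨by simp [hf1, hb00, hb10], by simp [hf2, hb00, hb10], ?_⟩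
  rw [e1, e2, e3]
  ring
end

section
/- The second edge function pair f₁(ξ₁,ξ₂) = α^{(1)}(ξ₂) w(ξ₂) b₁(ξ₁) and f₂(ξ₁,ξ₂) = −α^{(2)}(ξ₁) w(ξ₁) b₁(ξ₂) satisfies f₁(0,ξ) = f₂(ξ,0) = 0 and the G¹ condition α^{(1)}(ξ) ∂₂f₂(ξ,0) + α^{(2)}(ξ) ∂₁f₁(0,ξ) + β(ξ) ∂₂f₁(0,ξ) = 0 for any β, with transversal derivative (∂₁f₁(0,ξ))/α^{(1)}(ξ) = (p/h) w(ξ) whenever α^{(1)}(ξ) ≠ 0. -/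
open Set

lemma haux (g k : ℝ → ℝ) (hg : Differentiable ℝ g) (hk : Differentiable ℝ k) (x : ℝ × ℝ) :
    HasFDerivAt (fun y : ℝ × ℝ => g y.2 * k y.1)
      ((g x.2) • (deriv k x.1 • (ContinuousLinearMap.fst ℝ ℝ ℝ)) +
       (k x.1) • (deriv g x.2 • (ContinuousLinearMap.snd ℝ ℝ ℝ))) x := by
  have h1 : HasFDerivAt (fun y : ℝ × ℝ => g y.2)
      (deriv g x.2 • (ContinuousLinearMap.snd ℝ ℝ ℝ)) x :=
    (hg x.2).hasDerivAt.comp_hasFDerivAt x (hasFDerivAt_snd)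
  have h2 : HasFDerivAt (fun y : ℝ × ℝ => k y.1)
      (deriv k x.1 • (ContinuousLinearMap.fst ℝ ℝ ℝ)) x :=
    (hk x.1).hasDerivAt.comp_hasFDerivAt x (hasFDerivAt_fst)
  exact h1.mul h2

lemma haux' (g k : ℝ → ℝ) (hg : Differentiable ℝ g) (hk : Differentiable ℝ k) (x : ℝ × ℝ) :
    HasFDerivAt (fun y : ℝ × ℝ => g y.1 * k y.2)
      ((g x.1) • (deriv k x.2 • (ContinuousLinearMap.snd ℝ ℝ ℝ)) +
       (k x.2) • (deriv g x.1 • (ContinuousLinearMap.fst ℝ ℝ ℝ))) x := by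
  have h1 : HasFDerivAt (fun y : ℝ × ℝ => g y.1)
      (deriv g x.1 • (ContinuousLinearMap.fst ℝ ℝ ℝ)) x :=
    (hg x.1).hasDerivAt.comp_hasFDerivAt x (hasFDerivAt_fst)
  have h2 : HasFDerivAt (fun y : ℝ × ℝ => k y.2)
      (deriv k x.2 • (ContinuousLinearMap.snd ℝ ℝ ℝ)) x :=
    (hk x.2).hasDerivAt.comp_hasFDerivAt x (hasFDerivAt_snd)
  exact h1.mul h2

/-- The second family of edge functions has vanishing trace, satisfies the `G¹`
condition for any `β`, and has transversal derivative `(p/h)·w` after division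
by `α⁽¹⁾`. -/
theorem edge_function_second_family (w b1 α1 α2 : ℝ → ℝ) (h p : ℝ)
    (hh : 0 < h) (hp : 0 < p)
    (hw : Differentiable ℝ w) (hb1 : Differentiable ℝ b1)
    (hα1 : Differentiable ℝ α1) (hα2 : Differentiable ℝ α2)
    (hb10 : b1 0 = 0) (hd1 : deriv b1 0 = p / h)
    (f1 f2 : ℝ × ℝ → ℝ)
    (hf1 : f1 = fun x => α1 x.2 * w x.2 * b1 x.1)
    (hf2 : f2 = fun x => -(α2 x.1 * w x.1 * b1 x.2)) :
    ∀ ξ ∈ Icc (0:ℝ) 1,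
      f1 (0, ξ) = 0 ∧ f2 (ξ, 0) = 0 ∧
      (∀ β : ℝ, α1 ξ * pd2 f2 (ξ, 0) + α2 ξ * pd1 f1 (0, ξ) +
        β * pd2 f1 (0, ξ) = 0) ∧
      (α1 ξ ≠ 0 → pd1 f1 (0, ξ) / α1 ξ = p / h * w ξ) := by
  intro ξ _
  set g : ℝ → ℝ := fun t => α1 t * w t with hg
  set k : ℝ → ℝ := fun t => -(α2 t * w t) with hk
  have hgd : Differentiable ℝ g := (hα1.mul hw)
  have hkd : Differentiable ℝ k := (hα2.mul hw).neg
  have hf1' : f1 = fun y : ℝ × ℝ => g y.2 * b1 y.1 := by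
    funext y; simp [hf1, hg]
  have hf2' : f2 = fun y : ℝ × ℝ => k y.1 * b1 y.2 := by
    funext y; simp [hf2, hk]
  have H1 := haux g b1 hgd hb1 (0, ξ)
  have H2 := haux' k b1 hkd hb1 (ξ, 0)
  have hpd1f1 : pd1 f1 (0, ξ) = g ξ * (p / h) := by
    rw [hf1', pd1, H1.fderiv]
    simp [hd1]
  have hpd2f1 : pd2 f1 (0, ξ) = 0 := by
    rw [hf1', pd2, H1.fderiv]
    simp [hb10]
  have hpd2f2 : pd2 f2 (ξ, 0) = k ξ * (p / h) := by
    rw [hf2', pd2, H2.fderiv]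
    simp [hd1]
  refine ⟨by simp [hf1, hb10], by simp [hf2, hb10], ?_, ?_⟩
  · intro β
    rw [hpd1f1, hpd2f1, hpd2f2, hk, hg]
    ring
  · intro hne
    rw [hpd1f1, hg]
    field_simp
end

section
/- If f : Ω → ℝ is such that for each patch the pullback f ∘ F^{(i)} is C¹ on [0,1]², the F^{(i)} are C¹, regular and bijective, and across each interface the traces and transversal derivatives agree (the graph surfaces meet with G¹ continuity), then f is C¹ on the closure of the union of two patches sharing an interface; specifically, for two patches in standard form, if f₁ = f ∘ F^{(1)} and f₂ = f ∘ F^{(2)} satisfy f₁(0,ξ) = f₂(ξ,0) and α^{(1)} ∂₂f₂(·,0) + α^{(2)} ∂₁f₁(0,·) + β ∂₂f₁(0,·) = 0 with the gluing data of F^{(1)}, F^{(2)}, then the gradient of f (computed patchwise via the chain rule) is continuous across the interface. -/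
open Set Matrix

noncomputable def pd1v (F : ℝ × ℝ → ℝ × ℝ) (x : ℝ × ℝ) : ℝ × ℝ := fderiv ℝ F x (1, 0)
noncomputable def pd2v (F : ℝ × ℝ → ℝ × ℝ) (x : ℝ × ℝ) : ℝ × ℝ := fderiv ℝ F x (0, 1)
def det2 (u v : ℝ × ℝ) : ℝ := u.1 * v.2 - u.2 * v.1

/-- Jacobian matrix of a planar map. -/
noncomputable def Jac (F : ℝ × ℝ → ℝ × ℝ) (x : ℝ × ℝ) : Matrix (Fin 2) (Fin 2) ℝ :=
  !![(pd1v F x).1, (pd2v F x).1; (pd1v F x).2, (pd2v F x).2]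

/-- Patchwise gradient `(DF)⁻ᵀ ∇(f ∘ F)` of an isogeometric function. -/
noncomputable def patchGrad (F : ℝ × ℝ → ℝ × ℝ) (g : ℝ × ℝ → ℝ) (x : ℝ × ℝ) :
    Fin 2 → ℝ :=
  ((Jac F x)ᵀ)⁻¹ *ᵥ ![pd1 g x, pd2 g x]

theorem interface_deriv_eq {E : Type*} [NormedAddCommGroup E] [NormedSpace ℝ E]
    (g1 g2 : ℝ × ℝ → E) (h1 : ContDiff ℝ 1 g1) (h2 : ContDiff ℝ 1 g2)
    (hint : ∀ ξ ∈ Icc (0:ℝ) 1, g1 (0, ξ) = g2 (ξ, 0)) :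
    ∀ ξ ∈ Icc (0:ℝ) 1, fderiv ℝ g1 (0, ξ) (0, 1) = fderiv ℝ g2 (ξ, 0) (1, 0) := by
  have hG : ∀ ξ : ℝ, HasDerivAt (fun t => g1 (0, t)) (fderiv ℝ g1 (0, ξ) (0, 1)) ξ := by
    intro ξ
    have hc : HasDerivAt (fun t : ℝ => ((0:ℝ), t)) ((0:ℝ), (1:ℝ)) ξ :=
      (hasDerivAt_const ξ (0:ℝ)).prodMk (hasDerivAt_id ξ)
    exact ((h1.differentiable one_ne_zero (0, ξ)).hasFDerivAt).comp_hasDerivAt ξ hc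
  have hH : ∀ ξ : ℝ, HasDerivAt (fun t => g2 (t, 0)) (fderiv ℝ g2 (ξ, 0) (1, 0)) ξ := by
    intro ξ
    have hc : HasDerivAt (fun t : ℝ => (t, (0:ℝ))) ((1:ℝ), (0:ℝ)) ξ :=
      (hasDerivAt_id ξ).prodMk (hasDerivAt_const ξ (0:ℝ))
    exact ((h2.differentiable one_ne_zero (ξ, 0)).hasFDerivAt).comp_hasDerivAt ξ hc
  have hIoo : ∀ ξ ∈ Ioo (0:ℝ) 1,
      fderiv ℝ g1 (0, ξ) (0, 1) = fderiv ℝ g2 (ξ, 0) (1, 0) := by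
    intro ξ hξ
    have hev : (fun t => g1 (0, t)) =ᶠ[nhds ξ] (fun t => g2 (t, 0)) :=
      Filter.eventuallyEq_of_mem (Ioo_mem_nhds hξ.1 hξ.2)
        (fun t ht => hint t (Ioo_subset_Icc_self ht))
    have := (hG ξ).congr_of_eventuallyEq hev.symm
    exact this.unique (hH ξ)
  have hc1 : Continuous fun ξ : ℝ => fderiv ℝ g1 (0, ξ) (0, 1) := by
    have : Continuous fun x : ℝ × ℝ => fderiv ℝ g1 x := h1.continuous_fderiv one_ne_zero
    exact (ContinuousLinearMap.apply ℝ E ((0:ℝ), (1:ℝ))).continuous.comp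
      (this.comp (continuous_const.prodMk continuous_id))
  have hc2 : Continuous fun ξ : ℝ => fderiv ℝ g2 (ξ, 0) (1, 0) := by
    have : Continuous fun x : ℝ × ℝ => fderiv ℝ g2 x := h2.continuous_fderiv one_ne_zero
    exact (ContinuousLinearMap.apply ℝ E ((1:ℝ), (0:ℝ))).continuous.comp
      (this.comp (continuous_id.prodMk continuous_const))
  have hcl : Icc (0:ℝ) 1 = closure (Ioo (0:ℝ) 1) := (closure_Ioo one_ne_zero.symm).symm
  intro ξ hξ
  rw [hcl] at hξ
  exact Set.EqOn.closure hIoo hc1 hc2 hξ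


/-- If the pullbacks of `f` are `C¹`, match along the interface and satisfy the
`G¹` condition with the gluing data of the patches, then the patchwise gradient
of `f` is continuous across the interface: both patchwise gradients agree. -/
theorem c1_from_G1_graph (f : ℝ × ℝ → ℝ) (F1 F2 : ℝ × ℝ → ℝ × ℝ)
    (hF1 : ContDiff ℝ 1 F1) (hF2 : ContDiff ℝ 1 F2)
    (hreg1 : ∀ x, (Jac F1 x).det ≠ 0) (hreg2 : ∀ x, (Jac F2 x).det ≠ 0)
    (hinj1 : Set.InjOn F1 (Icc 0 1 ×ˢ Icc 0 1))
    (hinj2 : Set.InjOn F2 (Icc 0 1 ×ˢ Icc 0 1))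
    (hpull1 : ContDiff ℝ 1 (f ∘ F1)) (hpull2 : ContDiff ℝ 1 (f ∘ F2))
    (hintF : ∀ ξ ∈ Icc (0:ℝ) 1, F1 (0, ξ) = F2 (ξ, 0))
    (hintf : ∀ ξ ∈ Icc (0:ℝ) 1, (f ∘ F1) (0, ξ) = (f ∘ F2) (ξ, 0))
    (hG1 : ∀ ξ ∈ Icc (0:ℝ) 1,
      det2 (pd1v F1 (0, ξ)) (pd2v F1 (0, ξ)) * pd2 (f ∘ F2) (ξ, 0) +
        det2 (pd1v F2 (ξ, 0)) (pd2v F2 (ξ, 0)) * pd1 (f ∘ F1) (0, ξ) +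
        det2 (pd2v F2 (ξ, 0)) (pd1v F1 (0, ξ)) * pd2 (f ∘ F1) (0, ξ) = 0) :
    ∀ ξ ∈ Icc (0:ℝ) 1,
      patchGrad F1 (f ∘ F1) (0, ξ) = patchGrad F2 (f ∘ F2) (ξ, 0) := by
  intro ξ hξ
  -- tangential matching
  have hb : pd2v F1 (0, ξ) = pd1v F2 (ξ, 0) :=
    interface_deriv_eq F1 F2 hF1 hF2 hintF ξ hξ
  have hh : pd2 (f ∘ F1) (0, ξ) = pd1 (f ∘ F2) (ξ, 0) :=
    interface_deriv_eq (f ∘ F1) (f ∘ F2) hpull1 hpull2 hintf ξ hξ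
  set a := pd1v F1 (0, ξ) with ha
  set b := pd1v F2 (ξ, 0) with hbdef
  set c := pd2v F2 (ξ, 0) with hc
  set g1 := pd1 (f ∘ F1) (0, ξ) with hg1
  set g2 := pd2 (f ∘ F2) (ξ, 0) with hg2
  set h := pd1 (f ∘ F2) (ξ, 0) with hhdef
  set M1 : Matrix (Fin 2) (Fin 2) ℝ := (Jac F1 (0, ξ))ᵀ with hM1def
  set M2 : Matrix (Fin 2) (Fin 2) ℝ := (Jac F2 (ξ, 0))ᵀ with hM2def
  have hdet1 : M1.det ≠ 0 := by rw [hM1def, Matrix.det_transpose]; exact hreg1 _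
  have hdet2 : M2.det ≠ 0 := by rw [hM2def, Matrix.det_transpose]; exact hreg2 _
  set w1 : Fin 2 → ℝ := ![g1, h] with hw1
  set w2 : Fin 2 → ℝ := ![h, g2] with hw2
  set v : Fin 2 → ℝ := M1⁻¹ *ᵥ w1 with hv
  have hsolve1 : M1 *ᵥ v = w1 := by
    rw [hv, Matrix.mulVec_mulVec, Matrix.mul_nonsing_inv _ (isUnit_iff_ne_zero.mpr hdet1), Matrix.one_mulVec]
  have e1 : a.1 * v 0 + a.2 * v 1 = g1 := by
    have := congrFun hsolve1 0
    simpa [hM1def, Jac, Matrix.mulVec, dotProduct, Fin.sum_univ_two, hw1,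
      ← ha, ← hbdef, hb] using this
  have e2 : b.1 * v 0 + b.2 * v 1 = h := by
    have := congrFun hsolve1 1
    simpa [hM1def, Jac, Matrix.mulVec, dotProduct, Fin.sum_univ_two, hw1,
      ← ha, ← hbdef, hb, hh] using this
  have key : det2 a b * g2 + det2 b c * g1 + det2 c a * h = 0 := by
    have := hG1 ξ hξ
    rw [hb, hh] at this
    exact this
  have hα1 : det2 a b ≠ 0 := by
    have : (Jac F1 (0, ξ)).det = det2 a b := by
      simp [Jac, det2, ← ha, ← hbdef, hb, mul_comm]
    rw [← this]; exact hreg1 _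
  have hsolve2 : M2 *ᵥ v = w2 := by
    funext i
    fin_cases i
    · simpa [hM2def, Jac, Matrix.mulVec, dotProduct, Fin.sum_univ_two, hw2,
        ← hbdef, ← hc] using e2
    · have hrow : c.1 * v 0 + c.2 * v 1 = g2 := by
        apply mul_left_cancel₀ hα1
        simp only [det2] at key ⊢
        linear_combination (-(b.1 * c.2 - b.2 * c.1)) * e1 + (-(c.1 * a.2 - c.2 * a.1)) * e2 - key
      simpa [hM2def, Jac, Matrix.mulVec, dotProduct, Fin.sum_univ_two, hw2,
        ← hbdef, ← hc] using hrow
  have : patchGrad F2 (f ∘ F2) (ξ, 0) = v := by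
    have hw2' : (![pd1 (f ∘ F2) (ξ, 0), pd2 (f ∘ F2) (ξ, 0)] : Fin 2 → ℝ) = w2 := by
      simp [hw2, hhdef, hg2]
    rw [patchGrad, hw2', ← hM2def, ← hsolve2, Matrix.mulVec_mulVec,
      Matrix.nonsing_inv_mul _ (isUnit_iff_ne_zero.mpr hdet2), Matrix.one_mulVec]
  rw [this]
  have hw1' : (![pd1 (f ∘ F1) (0, ξ), pd2 (f ∘ F1) (0, ξ)] : Fin 2 → ℝ) = w1 := by
    simp [hw1, hg1, hhdef, hh]
  rw [patchGrad, hw1', ← hM1def, hv]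
end

section
/- Conversely, if f is C¹ on the union of two patches meeting along an interface as above, then the pullbacks f₁ = f ∘ F^{(1)}, f₂ = f ∘ F^{(2)} satisfy f₁(0,ξ) = f₂(ξ,0) and the linear relation α^{(1)}(ξ) ∂₂f₂(ξ,0) + α^{(2)}(ξ) ∂₁f₁(0,ξ) + β(ξ) ∂₂f₁(0,ξ) = 0 for all ξ ∈ [0,1], where α^{(1)}, α^{(2)}, β are the determinant gluing functions of F^{(1)}, F^{(2)}. -/
open Set

lemma clm_decomp {M : Type*} [NormedAddCommGroup M] [NormedSpace ℝ M]
    (L : ℝ × ℝ →L[ℝ] M) (v : ℝ × ℝ) :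
    L v = v.1 • L (1, 0) + v.2 • L (0, 1) := by
  have hv : v = v.1 • ((1:ℝ), (0:ℝ)) + v.2 • ((0:ℝ), (1:ℝ)) := by
    ext <;> simp
  calc L v = L (v.1 • ((1:ℝ), (0:ℝ)) + v.2 • ((0:ℝ), (1:ℝ))) := by rw [← hv]
    _ = v.1 • L (1, 0) + v.2 • L (0, 1) := by
        rw [map_add, map_smul, map_smul]

lemma inj_of_det (A : (ℝ × ℝ) →L[ℝ] (ℝ × ℝ))
    (h : det2 (A (1, 0)) (A (0, 1)) ≠ 0) : Function.Injective A := by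
  set a := A (1, 0) with ha
  set b := A (0, 1) with hb
  intro u v huv
  have hw : A (u - v) = 0 := by rw [map_sub, huv, sub_self]
  rw [clm_decomp] at hw
  set w := u - v with hwdef
  have h1 : w.1 * a.1 + w.2 * b.1 = 0 := by
    have := congrArg Prod.fst hw; simpa using this
  have h2 : w.1 * a.2 + w.2 * b.2 = 0 := by
    have := congrArg Prod.snd hw; simpa using this
  have hdet : det2 a b ≠ 0 := h
  have hw1 : w.1 = 0 := by
    have : w.1 * det2 a b = 0 := by
      unfold det2; linear_combination b.2 * h1 - b.1 * h2
    exact (mul_eq_zero.mp this).resolve_right hdet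
  have hw2 : w.2 = 0 := by
    have : w.2 * det2 a b = 0 := by
      unfold det2; linear_combination a.1 * h2 - a.2 * h1
    exact (mul_eq_zero.mp this).resolve_right hdet
  have : w = 0 := Prod.ext hw1 hw2
  have := sub_eq_zero.mp (hwdef ▸ this)
  exact this

/-- If `F` is `C¹` with invertible differential at `x` and `f ∘ F` is
differentiable at `x`, then `f` is differentiable at `F x`. -/
lemma diff_of_comp {F : ℝ × ℝ → ℝ × ℝ} (hF : ContDiff ℝ 1 F) (x : ℝ × ℝ)
    (h : det2 (pd1v F x) (pd2v F x) ≠ 0) {f : ℝ × ℝ → ℝ}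
    (hfd : DifferentiableAt ℝ (f ∘ F) x) : DifferentiableAt ℝ f (F x) := by
  set A := fderiv ℝ F x with hA
  have hinj : Function.Injective A := inj_of_det A h
  have hinj' : Function.Injective A.toLinearMap := hinj
  have hbij : Function.Bijective A.toLinearMap :=
    ⟨hinj', (LinearMap.injective_iff_surjective).mp hinj'⟩
  let E : (ℝ × ℝ) ≃L[ℝ] (ℝ × ℝ) :=
    (LinearEquiv.ofBijective A.toLinearMap hbij).toContinuousLinearEquiv
  have hEA : (E : (ℝ × ℝ) →L[ℝ] (ℝ × ℝ)) = A := by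
    ext v <;> rfl
  have hsd : HasStrictFDerivAt F (E : (ℝ × ℝ) →L[ℝ] (ℝ × ℝ)) x := by
    rw [hEA]
    exact (hF.contDiffAt).hasStrictFDerivAt one_ne_zero
  set g := hsd.localInverse F E x with hg
  have hgx : g (F x) = x := hsd.localInverse_apply_image
  have hev : ∀ᶠ y in nhds (F x), F (g y) = y := hsd.eventually_right_inverse
  have heq : f =ᶠ[nhds (F x)] (f ∘ F) ∘ g :=
    hev.mono (fun y hy => by simp [Function.comp, hy])
  have hgd : DifferentiableAt ℝ g (F x) :=
    hsd.to_localInverse.differentiableAt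
  have hfd' : DifferentiableAt ℝ (f ∘ F) (g (F x)) := by rw [hgx]; exact hfd
  have : DifferentiableAt ℝ ((f ∘ F) ∘ g) (F x) := hfd'.comp (F x) hgd
  exact heq.differentiableAt_iff.mpr this

/-- Conversely: if `f` is `C¹` on the union of two patches meeting along an
interface, the pullbacks match along the interface and satisfy the `G¹`
relation with the determinant gluing functions. -/
theorem G1_from_c1 (f : ℝ × ℝ → ℝ) (F1 F2 : ℝ × ℝ → ℝ × ℝ)
    (hF1 : ContDiff ℝ 1 F1) (hF2 : ContDiff ℝ 1 F2)
    (hreg1 : ∀ x, det2 (pd1v F1 x) (pd2v F1 x) ≠ 0)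
    (hreg2 : ∀ x, det2 (pd1v F2 x) (pd2v F2 x) ≠ 0)
    (hinj1 : Set.InjOn F1 (Icc 0 1 ×ˢ Icc 0 1))
    (hinj2 : Set.InjOn F2 (Icc 0 1 ×ˢ Icc 0 1))
    (hintF : ∀ ξ ∈ Icc (0:ℝ) 1, F1 (0, ξ) = F2 (ξ, 0))
    (hf : ContDiffOn ℝ 1 f
      (F1 '' (Icc 0 1 ×ˢ Icc 0 1) ∪ F2 '' (Icc 0 1 ×ˢ Icc 0 1))) :
    ∀ ξ ∈ Icc (0:ℝ) 1,
      (f ∘ F1) (0, ξ) = (f ∘ F2) (ξ, 0) ∧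
      det2 (pd1v F1 (0, ξ)) (pd2v F1 (0, ξ)) * pd2 (f ∘ F2) (ξ, 0) +
        det2 (pd1v F2 (ξ, 0)) (pd2v F2 (ξ, 0)) * pd1 (f ∘ F1) (0, ξ) +
        det2 (pd2v F2 (ξ, 0)) (pd1v F1 (0, ξ)) * pd2 (f ∘ F1) (0, ξ) = 0 := by
  intro ξ hξ
  have hint : F1 (0, ξ) = F2 (ξ, 0) := hintF ξ hξ
  refine ⟨by simp [Function.comp, hint], ?_⟩
  have hdF1 : DifferentiableAt ℝ F1 (0, ξ) := (hF1.differentiable one_ne_zero) _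
  have hdF2 : DifferentiableAt ℝ F2 (ξ, 0) := (hF2.differentiable one_ne_zero) _
  -- interface tangent equality: ∂₂F1(0,ξ) = ∂₁F2(ξ,0)
  have htan : pd2v F1 (0, ξ) = pd1v F2 (ξ, 0) := by
    have hγ1 : HasDerivAt (fun t : ℝ => F1 (0, t)) (pd2v F1 (0, ξ)) ξ := by
      have hin : HasDerivAt (fun t : ℝ => ((0 : ℝ), t)) ((0 : ℝ), (1 : ℝ)) ξ := by
        simpa using (hasDerivAt_const ξ (0:ℝ)).prodMk (hasDerivAt_id ξ)
      exact hdF1.hasFDerivAt.comp_hasDerivAt ξ hin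
    have hγ2 : HasDerivAt (fun t : ℝ => F2 (t, 0)) (pd1v F2 (ξ, 0)) ξ := by
      have hin : HasDerivAt (fun t : ℝ => (t, (0 : ℝ))) ((1 : ℝ), (0 : ℝ)) ξ := by
        simpa using (hasDerivAt_id ξ).prodMk (hasDerivAt_const ξ (0:ℝ))
      exact hdF2.hasFDerivAt.comp_hasDerivAt ξ hin
    have hu : UniqueDiffWithinAt ℝ (Icc (0:ℝ) 1) ξ := (uniqueDiffOn_Icc one_pos) ξ hξ
    have h1 : HasDerivWithinAt (fun t : ℝ => F1 (0, t)) (pd2v F1 (0, ξ)) (Icc 0 1) ξ :=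
      hγ1.hasDerivWithinAt
    have h2 : HasDerivWithinAt (fun t : ℝ => F1 (0, t)) (pd1v F2 (ξ, 0)) (Icc 0 1) ξ :=
      hγ2.hasDerivWithinAt.congr (fun t ht => (hintF t ht)) hint
    rw [← h1.derivWithin hu, ← h2.derivWithin hu]
  by_cases hd : DifferentiableAt ℝ f (F1 (0, ξ))
  · -- chain rule case
    have hd2 : DifferentiableAt ℝ f (F2 (ξ, 0)) := hint ▸ hd
    set L := fderiv ℝ f (F1 (0, ξ)) with hL
    have hc1 : fderiv ℝ (f ∘ F1) (0, ξ) = L.comp (fderiv ℝ F1 (0, ξ)) :=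
      fderiv_comp _ hd hdF1
    have hc2 : fderiv ℝ (f ∘ F2) (ξ, 0) = L.comp (fderiv ℝ F2 (ξ, 0)) := by
      have : fderiv ℝ (f ∘ F2) (ξ, 0) =
          (fderiv ℝ f (F2 (ξ, 0))).comp (fderiv ℝ F2 (ξ, 0)) := fderiv_comp _ hd2 hdF2
      rw [this, hL, hint]
    have e1 : pd1 (f ∘ F1) (0, ξ) = L (pd1v F1 (0, ξ)) := by
      simp [pd1, pd1v, hc1]
    have e2 : pd2 (f ∘ F1) (0, ξ) = L (pd2v F1 (0, ξ)) := by
      simp [pd2, pd2v, hc1]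
    have e3 : pd2 (f ∘ F2) (ξ, 0) = L (pd2v F2 (ξ, 0)) := by
      simp [pd2, pd2v, hc2]
    rw [e1, e2, e3, ← htan]
    set a := pd1v F1 (0, ξ)
    set b := pd2v F1 (0, ξ)
    set d := pd2v F2 (ξ, 0)
    rw [clm_decomp L a, clm_decomp L b, clm_decomp L d]
    simp only [det2, smul_eq_mul]
    ring
  · -- junk case: all full derivatives are zero
    have hnd1 : ¬ DifferentiableAt ℝ (f ∘ F1) (0, ξ) := fun hc =>
      hd (diff_of_comp hF1 (0, ξ) (hreg1 _) hc)
    have hnd2 : ¬ DifferentiableAt ℝ (f ∘ F2) (ξ, 0) := fun hc =>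
      hd (hint ▸ diff_of_comp hF2 (ξ, 0) (hreg2 _) hc)
    have z1 : fderiv ℝ (f ∘ F1) (0, ξ) = 0 := fderiv_zero_of_not_differentiableAt hnd1
    have z2 : fderiv ℝ (f ∘ F2) (ξ, 0) = 0 := fderiv_zero_of_not_differentiableAt hnd2
    simp [pd1, pd2, z1, z2]
end
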